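/- The function h attains a global minimum on (0,∞), and its minimum value m = inf_{x > 0} h(x) satisfies 2.7261 < m < 2.7263; moreover the minimum is attained at a point x* with 2.1839 < x* < 2.1840. -/
import Mathlib


open Real Set

/-- The rational function from LeBrun whose minimum over `(0,∞)` gives
the minimal Calabi energy `c_min = 96π² · min h` for the Page metric. -/
noncomputable def h (x : ℝ) : ℝ :=
  (4 + 14*x + 16*x^2 + 3*x^3) / (x * (6 + 6*x + x^2))

private lemma denom_pos {x : ℝ} (hx : 0 < x) : 0 < x * (6 + 6*x + x^2) := by nlinarith

/-- `h` attains a global minimum on `(0,∞)`; its minimum value lies strictly between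
`2.7261` and `2.7263`, attained at a point `x*` with `2.1839 < x* < 2.1840`. -/
theorem stmt_15 :
    ∃ xs : ℝ, xs ∈ Set.Ioi (0 : ℝ) ∧ (∀ x ∈ Set.Ioi (0 : ℝ), h xs ≤ h x) ∧
      (2.7261 < h xs ∧ h xs < 2.7263) ∧ (2.1839 < xs ∧ xs < 2.1840) := by
  -- xs is a root of Q(s) = s^4 + 4 s^3 - 24 s - 12 in (2.1839, 2.1840)
  have hQcont : ContinuousOn (fun s : ℝ => s^4 + 4*s^3 - 24*s - 12)
      (Set.Icc (2.1839 : ℝ) 2.1840) := by fun_prop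
  have hsub : Set.Ioo ((fun s : ℝ => s^4 + 4*s^3 - 24*s - 12) 2.1839)
      ((fun s : ℝ => s^4 + 4*s^3 - 24*s - 12) 2.1840) ⊆
      (fun s : ℝ => s^4 + 4*s^3 - 24*s - 12) '' Set.Ioo 2.1839 2.1840 :=
    intermediate_value_Ioo (by norm_num) hQcont
  have h0 : (0 : ℝ) ∈ Set.Ioo ((fun s : ℝ => s^4 + 4*s^3 - 24*s - 12) 2.1839)
      ((fun s : ℝ => s^4 + 4*s^3 - 24*s - 12) 2.1840) := by
    constructor <;> norm_num
  obtain ⟨xs, hxsI, hQ⟩ := hsub h0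
  simp only at hQ
  obtain ⟨hxl, hxr⟩ := hxsI
  have hxl' : (2.1839 : ℝ) < xs := hxl
  have hxr' : xs < (2.1840 : ℝ) := hxr
  have hxs0 : (0 : ℝ) < xs := by linarith [show (2.1839:ℝ) > 0 by norm_num]
  have hDxs : 0 < xs * (6 + 6*xs + xs^2) := denom_pos hxs0
  refine ⟨xs, hxs0, ?_, ⟨?_, ?_⟩, hxl', hxr'⟩
  · -- global minimality
    intro x hx
    have hx0 : (0 : ℝ) < x := hx
    have hDx : 0 < x * (6 + 6*x + x^2) := denom_pos hx0
    rw [h, h, div_le_div_iff₀ hDxs hDx]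
    have key : 0 ≤ (x - xs)^2 * ((2*xs^2 + 4*xs - 4)*x + (2*xs^3 + 8*xs^2 + 4*xs - 24)) := by
      apply mul_nonneg (sq_nonneg _)
      nlinarith
    nlinarith [key, hQ, sq_nonneg (x - xs)]
  · -- lower bound on the value: N(xs) > 2.7261 * D(xs)
    rw [h, lt_div_iff₀ hDxs]
    nlinarith [hxl', hxr', sq_nonneg (xs - 2.18393), hxs0]
  · -- upper bound: h xs ≤ h 2.18395 < 2.7263
    have hmin : h xs ≤ h 2.18395 := by
      have hx0 : (0 : ℝ) < 2.18395 := by norm_num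
      have hDx : 0 < (2.18395 : ℝ) * (6 + 6*2.18395 + 2.18395^2) := denom_pos hx0
      rw [h, h, div_le_div_iff₀ hDxs hDx]
      have key : 0 ≤ ((2.18395 : ℝ) - xs)^2 *
          ((2*xs^2 + 4*xs - 4)*2.18395 + (2*xs^3 + 8*xs^2 + 4*xs - 24)) := by
        apply mul_nonneg (sq_nonneg _)
        nlinarith
      nlinarith [key, hQ]
    have : h 2.18395 < 2.7263 := by
      rw [h, div_lt_iff₀ (denom_pos (by norm_num))]
      norm_num
    linarith
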